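/- Conditional mutual information decomposes under a classical flag appended to the conditioning system: let ρ and σ be density matrices (Hermitian, positive semidefinite, trace 1) indexed by K×L×M, let λ ∈ [0,1], and define τ, indexed by K×L×(M×Fin 2), by τ := λ·(ρ ⊗ |0⟩⟨0|) + (1−λ)·(σ ⊗ |1⟩⟨1|), where the Fin 2 factor is appended to the M system. Then I(K;L|M,Fin 2)_τ = λ·I(K;L|M)_ρ + (1−λ)·I(K;L|M)_σ. -/

import Mathlib

/-!
With a classical flag `k` appended to `M`, each of the four states entering `I(K;L|M)` becomes,
up to a reordering of the tensor factors, block diagonal with blocks `pₖ • (marginal of ρₖ)`.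
The spectrum of such a matrix is the union of the spectra `pₖ · spec(marginal of ρₖ)`, so
`φ(pλ) = p φ(λ) + λ φ(p)` gives its entropy as `∑ₖ pₖ H(marginal of ρₖ) + ∑ₖ φ(pₖ) tr ρₖ`.
The second sum is the same for all four marginals, since partial traces preserve the trace,
and cancels in the alternating sum defining the conditional mutual information.
-/

open scoped BigOperators
open Matrix Kronecker
open scoped ComplexOrder

noncomputable section

/-- `φ(t) = -t·log₂ t`. -/
noncomputable def entPhi (t : ℝ) : ℝ := -(t * Real.logb 2 t)

/-- von Neumann entropy (in bits) of a Hermitian matrix, via its eigenvalues. -/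
noncomputable def vnEntropy {n : Type*} [Fintype n] [DecidableEq n] (ρ : Matrix n n ℂ) : ℝ :=
  if h : ρ.IsHermitian then ∑ i, entPhi (h.eigenvalues i) else 0

/-- Partial trace over the second factor. -/
def ptrace2 {I J : Type*} [Fintype J] (ρ : Matrix (I × J) (I × J) ℂ) : Matrix I I ℂ :=
  Matrix.of fun i i' => ∑ j, ρ (i, j) (i', j)

/-- Partial trace over the first factor. -/
def ptrace1 {I J : Type*} [Fintype I] (ρ : Matrix (I × J) (I × J) ℂ) : Matrix J J ℂ :=
  Matrix.of fun j j' => ∑ i, ρ (i, j) (i, j')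

/-- Marginal on `K × M` of a state on `K × L × M`. -/
def margKM {K L M : Type*} [Fintype L] (σ : Matrix (K × L × M) (K × L × M) ℂ) :
    Matrix (K × M) (K × M) ℂ :=
  Matrix.of fun p q => ∑ l, σ (p.1, l, p.2) (q.1, l, q.2)

/-- Marginal on `L × M` of a state on `K × L × M`. -/
def margLM {K L M : Type*} [Fintype K] (σ : Matrix (K × L × M) (K × L × M) ℂ) :
    Matrix (L × M) (L × M) ℂ :=
  Matrix.of fun p q => ∑ k, σ (k, p.1, p.2) (k, q.1, q.2)

/-- Marginal on `M` of a state on `K × L × M`. -/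
def margM {K L M : Type*} [Fintype K] [Fintype L] (σ : Matrix (K × L × M) (K × L × M) ℂ) :
    Matrix M M ℂ :=
  Matrix.of fun m m' => ∑ k, ∑ l, σ (k, l, m) (k, l, m')

/-- Conditional mutual information `I(K;L|M)` of a state on `K × L × M`. -/
noncomputable def CMI {K L M : Type*} [Fintype K] [Fintype L] [Fintype M]
    [DecidableEq K] [DecidableEq L] [DecidableEq M]
    (σ : Matrix (K × L × M) (K × L × M) ℂ) : ℝ :=
  vnEntropy (margKM σ) + vnEntropy (margLM σ) - vnEntropy σ - vnEntropy (margM σ)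

def IsProbDist {X : Type*} [Fintype X] (p : X → ℝ) : Prop :=
  (∀ x, 0 ≤ p x) ∧ ∑ x, p x = 1

/-- An assemblage: PSD members, normalized for each input, and no-signaling. -/
def IsAssemblage {A X B : Type*} [Fintype A] [Fintype B]
    (ρ : A → X → Matrix B B ℂ) : Prop :=
  (∀ a x, (ρ a x).PosSemidef) ∧
  (∀ x, ∑ a, (ρ a x).trace = 1) ∧
  (∀ x x' : X, ∑ a, ρ a x = ∑ a, ρ a x')

-- `Real.log x = Real.log |x|` makes this hold for all real `c` and `x`.
theorem entPhi_mul (c x : ℝ) : entPhi (c * x) = c * entPhi x + x * entPhi c := by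
  rcases eq_or_ne c 0 with rfl | hc
  · simp [entPhi]
  rcases eq_or_ne x 0 with rfl | hx
  · simp [entPhi]
  simp only [entPhi, Real.logb, Real.log_mul hc hx]
  ring

theorem Matrix.charpoly_blockDiagonal {R n o : Type*} [CommRing R] [Fintype n] [DecidableEq n]
    [Fintype o] [DecidableEq o] (A : o → Matrix n n R) :
    (blockDiagonal A).charpoly = ∏ k, (A k).charpoly := by
  have hchar : charmatrix (blockDiagonal A) = blockDiagonal fun k => charmatrix (A k) := by
    ext ⟨i, k⟩ ⟨j, k'⟩
    by_cases hk : k = k' <;> by_cases hij : i = j <;> simp [blockDiagonal_apply, hk, hij]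
  rw [charpoly, hchar, det_blockDiagonal]
  rfl

section Entropy

variable {n m o : Type*} [Fintype n] [DecidableEq n] [Fintype m] [DecidableEq m]
  [Fintype o] [DecidableEq o]

theorem vnEntropy_eq_sum_roots {A : Matrix n n ℂ} (hA : A.IsHermitian) :
    vnEntropy A = (A.charpoly.roots.map fun z => entPhi z.re).sum := by
  rw [vnEntropy, dif_pos hA, hA.roots_charpoly_eq_eigenvalues, Multiset.map_map,
    Finset.sum_map_val]
  simp

theorem vnEntropy_submatrix_equiv (A : Matrix n n ℂ) (e : m ≃ n) :
    vnEntropy (A.submatrix e e) = vnEntropy A := by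
  by_cases hA : A.IsHermitian
  · rw [vnEntropy_eq_sum_roots (hA.submatrix e), vnEntropy_eq_sum_roots hA,
      ← charpoly_reindex e.symm A]
    rfl
  · have hAe : ¬(A.submatrix e e).IsHermitian := fun h => hA <| by
      simpa using h.submatrix e.symm
    rw [vnEntropy, dif_neg hAe, vnEntropy, dif_neg hA]

theorem vnEntropy_blockDiagonal {A : o → Matrix n n ℂ} (hA : ∀ k, (A k).IsHermitian) :
    vnEntropy (blockDiagonal A) = ∑ k, vnEntropy (A k) := by
  rw [vnEntropy_eq_sum_roots (isHermitian_blockDiagonal_iff.mpr hA), charpoly_blockDiagonal,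
    Polynomial.roots_prod _ _ (Finset.prod_ne_zero_iff.mpr fun k _ => (A k).charpoly_monic.ne_zero),
    Multiset.map_bind, Multiset.sum_bind]
  simp_rw [vnEntropy_eq_sum_roots (hA _)]
  rfl

theorem vnEntropy_cfc {A : Matrix n n ℂ} (hA : A.IsHermitian) (f : ℝ → ℝ) :
    vnEntropy (cfc f A) = ∑ i, entPhi (f (hA.eigenvalues i)) := by
  rw [vnEntropy_eq_sum_roots (cfc_predicate f A).isHermitian, hA.charpoly_cfc_eq,
    Polynomial.roots_prod _ _ (Finset.prod_ne_zero_iff.mpr fun i _ => Polynomial.X_sub_C_ne_zero _)]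
  simp only [Polynomial.roots_X_sub_C, Multiset.map_bind, Multiset.sum_bind, Multiset.map_singleton,
    Multiset.sum_singleton]
  rfl

theorem vnEntropy_real_smul {A : Matrix n n ℂ} (hA : A.IsHermitian) (c : ℝ) :
    vnEntropy ((c : ℂ) • A) = c * vnEntropy A + entPhi c * A.trace.re := by
  have hcA : (c : ℂ) • A = cfc (c * ·) A := by
    rw [cfc_const_mul_id c A hA.isSelfAdjoint]
    ext i j
    simp
  rw [hcA, vnEntropy_cfc hA, vnEntropy, dif_pos hA, hA.trace_eq_sum_eigenvalues]
  simp [entPhi_mul, Finset.sum_add_distrib, Finset.mul_sum, mul_comm]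

theorem vnEntropy_blockDiagonal_real_smul {A : o → Matrix n n ℂ} (hA : ∀ k, (A k).IsHermitian)
    (p : o → ℝ) :
    vnEntropy (blockDiagonal fun k => (p k : ℂ) • A k)
      = ∑ k, (p k * vnEntropy (A k) + entPhi (p k) * (A k).trace.re) := by
  rw [vnEntropy_blockDiagonal fun k => (hA k).smul (Complex.conj_ofReal (p k))]
  simp_rw [vnEntropy_real_smul (hA _)]

end Entropy

section Marginals

variable {K L M : Type*} {ρ : Matrix (K × L × M) (K × L × M) ℂ}

theorem Matrix.IsHermitian.margKM [Fintype L] (h : ρ.IsHermitian) : (margKM ρ).IsHermitian := by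
  ext p q
  simp only [conjTranspose_apply, _root_.margKM, of_apply, star_sum, h.apply]

theorem Matrix.IsHermitian.margLM [Fintype K] (h : ρ.IsHermitian) : (margLM ρ).IsHermitian := by
  ext p q
  simp only [conjTranspose_apply, _root_.margLM, of_apply, star_sum, h.apply]

theorem Matrix.IsHermitian.margM [Fintype K] [Fintype L] (h : ρ.IsHermitian) :
    (margM ρ).IsHermitian := by
  ext p q
  simp only [conjTranspose_apply, _root_.margM, of_apply, star_sum, h.apply]

theorem trace_margKM [Fintype K] [Fintype L] [Fintype M] : (margKM ρ).trace = ρ.trace := by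
  simp only [trace, diag, margKM, of_apply, Fintype.sum_prod_type]
  exact Finset.sum_congr rfl fun k _ => Finset.sum_comm

theorem trace_margLM [Fintype K] [Fintype L] [Fintype M] : (margLM ρ).trace = ρ.trace := by
  simp only [trace, diag, margLM, of_apply, Fintype.sum_prod_type]
  exact (Finset.sum_congr rfl fun l _ => Finset.sum_comm).trans Finset.sum_comm

theorem trace_margM [Fintype K] [Fintype L] [Fintype M] : (margM ρ).trace = ρ.trace := by
  simp only [trace, diag, margM, of_apply, Fintype.sum_prod_type]
  exact Finset.sum_comm.trans (Finset.sum_congr rfl fun k _ => Finset.sum_comm)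

end Marginals

section ClassicalFlag

variable {K L M o : Type*} [DecidableEq o]

/-- The classical-quantum state `∑ₖ pₖ ρₖ ⊗ |k⟩⟨k|`, with the flag register `o` joined to the
conditioning system `M`. -/
def appendFlag (p : o → ℝ) (ρ : o → Matrix (K × L × M) (K × L × M) ℂ) :
    Matrix (K × L × (M × o)) (K × L × (M × o)) ℂ :=
  of fun q q' => if q.2.2.2 = q'.2.2.2 then
    (p q.2.2.2 : ℂ) * ρ q.2.2.2 (q.1, q.2.1, q.2.2.1) (q'.1, q'.2.1, q'.2.2.1) else 0

variable (p : o → ℝ) (ρs : o → Matrix (K × L × M) (K × L × M) ℂ)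

theorem appendFlag_eq_submatrix :
    appendFlag p ρs = (blockDiagonal fun k => (p k : ℂ) • ρs k).submatrix
      (((Equiv.refl K).prodCongr (Equiv.prodAssoc L M o).symm).trans
        (Equiv.prodAssoc K (L × M) o).symm)
      (((Equiv.refl K).prodCongr (Equiv.prodAssoc L M o).symm).trans
        (Equiv.prodAssoc K (L × M) o).symm) := by
  ext q q'
  simp [appendFlag, blockDiagonal_apply]

theorem margKM_appendFlag [Fintype L] :
    margKM (appendFlag p ρs) = (blockDiagonal fun k => (p k : ℂ) • margKM (ρs k)).submatrix
      (Equiv.prodAssoc K M o).symm (Equiv.prodAssoc K M o).symm := by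
  ext q q'
  simp [appendFlag, margKM, blockDiagonal_apply, Finset.mul_sum]

theorem margLM_appendFlag [Fintype K] :
    margLM (appendFlag p ρs) = (blockDiagonal fun k => (p k : ℂ) • margLM (ρs k)).submatrix
      (Equiv.prodAssoc L M o).symm (Equiv.prodAssoc L M o).symm := by
  ext q q'
  simp [appendFlag, margLM, blockDiagonal_apply, Finset.mul_sum]

theorem margM_appendFlag [Fintype K] [Fintype L] :
    margM (appendFlag p ρs) = blockDiagonal fun k => (p k : ℂ) • margM (ρs k) := by
  ext q q'
  simp [appendFlag, margM, blockDiagonal_apply, Finset.mul_sum]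

theorem CMI_appendFlag [Fintype K] [Fintype L] [Fintype M] [Fintype o]
    [DecidableEq K] [DecidableEq L] [DecidableEq M] (hρs : ∀ k, (ρs k).IsHermitian) :
    CMI (appendFlag p ρs) = ∑ k, p k * CMI (ρs k) := by
  rw [CMI, margKM_appendFlag, margLM_appendFlag, margM_appendFlag, appendFlag_eq_submatrix]
  simp only [vnEntropy_submatrix_equiv, vnEntropy_blockDiagonal_real_smul hρs,
    vnEntropy_blockDiagonal_real_smul fun k => (hρs k).margKM,
    vnEntropy_blockDiagonal_real_smul fun k => (hρs k).margLM,
    vnEntropy_blockDiagonal_real_smul fun k => (hρs k).margM,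
    trace_margKM, trace_margLM, trace_margM, ← Finset.sum_add_distrib, ← Finset.sum_sub_distrib]
  exact Finset.sum_congr rfl fun k _ => by rw [CMI]; ring

end ClassicalFlag

theorem cmi_classical_flag_decomposition_general {K L M : Type*}
    [Fintype K] [Fintype L] [Fintype M]
    [DecidableEq K] [DecidableEq L] [DecidableEq M]
    (ρ σ : Matrix (K × L × M) (K × L × M) ℂ)
    (hρ : ρ.PosSemidef)
    (hσ : σ.PosSemidef)
    (lam : ℝ)
    (τ : Matrix (K × L × M × Fin 2) (K × L × M × Fin 2) ℂ)
    (hτ : τ = Matrix.of fun q q' =>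
      ((lam : ℝ) : ℂ) * ρ (q.1, q.2.1, q.2.2.1) (q'.1, q'.2.1, q'.2.2.1) *
        (if q.2.2.2 = 0 ∧ q'.2.2.2 = 0 then 1 else 0)
      + ((1 - lam : ℝ) : ℂ) * σ (q.1, q.2.1, q.2.2.1) (q'.1, q'.2.1, q'.2.2.1) *
        (if q.2.2.2 = 1 ∧ q'.2.2.2 = 1 then 1 else 0)) :
    CMI τ = lam * CMI ρ + (1 - lam) * CMI σ := by
  have hτ_flag : τ = appendFlag ![lam, 1 - lam] ![ρ, σ] := by
    subst hτ
    ext ⟨k, l, m, i⟩ ⟨k', l', m', j⟩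
    fin_cases i <;> fin_cases j <;> simp [appendFlag]
  have hherm : ∀ k, (![ρ, σ] k).IsHermitian := Fin.forall_fin_two.mpr ⟨hρ.1, hσ.1⟩
  rw [hτ_flag, CMI_appendFlag _ _ hherm, Fin.sum_univ_two]
  rfl

/-- CMI decomposes under a classical flag appended to the conditioning system. -/
theorem cmi_classical_flag_decomposition {K L M : Type*}
    [Fintype K] [Fintype L] [Fintype M]
    [DecidableEq K] [DecidableEq L] [DecidableEq M]
    (ρ σ : Matrix (K × L × M) (K × L × M) ℂ)
    (hρ : ρ.PosSemidef) (hρt : ρ.trace = 1)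
    (hσ : σ.PosSemidef) (hσt : σ.trace = 1)
    (lam : ℝ) (h0 : 0 ≤ lam) (h1 : lam ≤ 1)
    (τ : Matrix (K × L × M × Fin 2) (K × L × M × Fin 2) ℂ)
    (hτ : τ = Matrix.of fun q q' =>
      ((lam : ℝ) : ℂ) * ρ (q.1, q.2.1, q.2.2.1) (q'.1, q'.2.1, q'.2.2.1) *
        (if q.2.2.2 = 0 ∧ q'.2.2.2 = 0 then 1 else 0)
      + ((1 - lam : ℝ) : ℂ) * σ (q.1, q.2.1, q.2.2.1) (q'.1, q'.2.1, q'.2.2.1) *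
        (if q.2.2.2 = 1 ∧ q'.2.2.2 = 1 then 1 else 0)) :
    CMI τ = lam * CMI ρ + (1 - lam) * CMI σ :=
  cmi_classical_flag_decomposition_general ρ σ hρ hσ lam τ hτ
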